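/- arXiv:1307.7763 — 8 statements merged into one kernel-verified Lean document; each statement's English description precedes it below -/
import Mathlib

section
/- Let ω be a 3-cocycle on a finite group G, and define c^ω_g(x,y) := ω(g,x,y)·ω(x,y,(xy)⁻¹g(xy)) / ω(x, x⁻¹gx, y). Then c^ω is a twisted 2-cocycle, i.e. c^ω_g(x,y)·c^ω_g(xy,z) = c^ω_g(x,yz)·c^ω_{x⁻¹gx}(y,z) for all g,x,y,z ∈ G. -/
/-- The 3-cocycle condition for `ω : G×G×G → U(1)`. -/
def IsCocycle {G : Type*} [Group G] (ω : G → G → G → Circle) : Prop :=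
  ∀ a b c d : G, ω a b c * ω a (b * c) d * ω b c d = ω (a * b) c d * ω a b (c * d)

/-- `ω` is normalized: it equals 1 whenever any argument is the identity. -/
def IsNormalized {G : Type*} [Group G] (ω : G → G → G → Circle) : Prop :=
  ∀ a b c : G, a = 1 ∨ b = 1 ∨ c = 1 → ω a b c = 1

/-- The 3-coboundary of a 2-cochain `φ`. -/
noncomputable def dCochain {G : Type*} [Group G] (φ : G → G → Circle) (a b c : G) : Circle :=
  φ a (b * c) * φ b c / (φ a b * φ (a * b) c)

/-- The twisted 2-cocycle condition. -/
def IsTwistedCocycle {G : Type*} [Group G] (c : G → G → G → Circle) : Prop :=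
  ∀ g x y z : G, c g x y * c g (x * y) z = c g x (y * z) * c (x⁻¹ * g * x) y z

/-- The twisted 2-cocycle `c^ω` associated to a 3-cocycle `ω`. -/
noncomputable def cOmega {G : Type*} [Group G] (ω : G → G → G → Circle) (g x y : G) : Circle :=
  ω g x y * ω x y ((x * y)⁻¹ * g * (x * y)) / ω x (x⁻¹ * g * x) y

private lemma aux_calc (a1 a2 a3 a4 a5 a6 a7 a8 a9 a10 a11 a12 b1 b2 b3 b4 : ℂ)
    (hb1 : b1 ≠ 0) (hb2 : b2 ≠ 0) (hb3 : b3 ≠ 0) (hb4 : b4 ≠ 0)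
    (A : a1 * a4 * b1 = b2 * a7)
    (B : a3 * b3 * a10 = b2 * a9)
    (C : a2 * b3 * a12 = a6 * b4)
    (D : b1 * a8 * a11 = a5 * b4) :
    a1 * a2 * a4 * a5 * a9 * a12 = a3 * a6 * a7 * a8 * a10 * a11 := by
  have key : (a1 * a2 * a4 * a5 * a9 * a12) * (b1 * b2 * b3 * b4)
      = (a3 * a6 * a7 * a8 * a10 * a11) * (b1 * b2 * b3 * b4) := by
    have k1 := congrArg₂ (· * ·) (congrArg₂ (· * ·) (congrArg₂ (· * ·) A C) D.symm) B.symm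
    linear_combination k1
  exact mul_right_cancel₀ (by simp [hb1, hb2, hb3, hb4]) key

theorem cOmega_isTwistedCocycle {G : Type*} [Group G] [Fintype G]
    (ω : G → G → G → Circle) (hω : IsCocycle ω) :
    IsTwistedCocycle (cOmega ω) := by
  intro g x y z
  unfold cOmega
  have e1 : x * (y * z) = x * y * z := by group
  have e2 : (y * z)⁻¹ * (x⁻¹ * g * x) * (y * z) = (x * y * z)⁻¹ * g * (x * y * z) := by group
  have e3 : y⁻¹ * (x⁻¹ * g * x) * y = (x * y)⁻¹ * g * (x * y) := by group
  rw [e1, e2, e3]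
  have A := hω g x y z
  have B := hω x (x⁻¹ * g * x) y z
  have C := hω x y ((x * y)⁻¹ * g * (x * y)) z
  have D := hω x y z ((x * y * z)⁻¹ * g * (x * y * z))
  have f1 : x * (x⁻¹ * g * x) = g * x := by group
  have f2 : y * ((x * y)⁻¹ * g * (x * y)) = (x⁻¹ * g * x) * y := by group
  have f3 : ((x * y)⁻¹ * g * (x * y)) * z = z * ((x * y * z)⁻¹ * g * (x * y * z)) := by group
  rw [f1] at B
  rw [f2, f3] at C
  have A2 := congrArg (fun t : Circle => (t : ℂ)) A
  have B2 := congrArg (fun t : Circle => (t : ℂ)) B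
  have C2 := congrArg (fun t : Circle => (t : ℂ)) C
  have D2 := congrArg (fun t : Circle => (t : ℂ)) D
  push_cast at A2 B2 C2 D2
  have key := aux_calc _ _ _ _ _ _ _ _ _ _ _ _ _ _ _ _
    (Circle.coe_ne_zero (ω x y z)) (Circle.coe_ne_zero (ω (g*x) y z))
    (Circle.coe_ne_zero (ω x ((x⁻¹*g*x)*y) z))
    (Circle.coe_ne_zero (ω x y (z * ((x*y*z)⁻¹*g*(x*y*z)))))
    A2 B2 C2 D2
  rw [← Circle.coe_inj]
  push_cast
  rw [div_mul_div_comm, div_mul_div_comm, div_eq_div_iff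
    (mul_ne_zero (Circle.coe_ne_zero _) (Circle.coe_ne_zero _))
    (mul_ne_zero (Circle.coe_ne_zero _) (Circle.coe_ne_zero _))]
  linear_combination key
end

section
/- Let ω and ω' = ω·dφ be cohomologous 3-cocycles on a finite group G, where dφ is the 3-coboundary of a 2-cochain φ. Then the associated twisted 2-cocycles satisfy c^{ω'} = c^ω·dε, where ε_g(x) := φ(x, x⁻¹gx)/φ(g,x) and (dε_g)(x,y) := ε_g(x)·ε_{x⁻¹gx}(y)/ε_g(xy). -/
theorem cOmega_coboundary {G : Type*} [Group G] [Fintype G]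
    (ω ω' : G → G → G → Circle) (φ : G → G → Circle)
    (hω : IsCocycle ω)
    (hω' : ∀ a b c : G, ω' a b c = ω a b c * dCochain φ a b c) :
    ∀ g x y : G,
      cOmega ω' g x y =
        cOmega ω g x y *
          ((φ x (x⁻¹ * g * x) / φ g x) *
            (φ y (y⁻¹ * (x⁻¹ * g * x) * y) / φ (x⁻¹ * g * x) y) /
            (φ (x * y) ((x * y)⁻¹ * g * (x * y)) / φ g (x * y))) := by
  intro g x y
  simp only [cOmega, dCochain, hω', mul_assoc, mul_inv_rev, mul_inv_cancel_left,
    inv_mul_cancel_left]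
  apply Circle.coe_injective
  push_cast
  field_simp
end

section
/- Let c be a twisted 2-cocycle on a finite group G, and let c' = c·dε for an arbitrary function ε: G×G → U(1), where (dε_g)(x,y) = ε_g(x)·ε_{x⁻¹gx}(y)/ε_g(xy). Then a pair (g,h) with h ∈ Z(g) is c-regular if and only if it is c'-regular. -/
/-- `(g,h)` is a `c`-regular pair: `h` centralizes `g` and
`c_g(h,x) = c_g(x,h)` for all `x ∈ Z(g) ∩ Z(h)`. -/
def IsRegularPair {G : Type*} [Group G] (c : G → G → G → Circle) (g h : G) : Prop :=
  h * g = g * h ∧ ∀ x : G, x * g = g * x → x * h = h * x → c g h x = c g x h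

theorem regular_iff_regular_coboundary {G : Type*} [Group G] [Fintype G]
    (c : G → G → G → Circle) (ε : G → G → Circle)
    (hc : IsTwistedCocycle c)
    (g h : G) (hcomm : h * g = g * h) :
    IsRegularPair c g h ↔
      IsRegularPair (fun g x y => c g x y * (ε g x * ε (x⁻¹ * g * x) y / ε g (x * y))) g h := by
  have key : ∀ x : G, x * g = g * x → x * h = h * x →
      (ε g h * ε (h⁻¹ * g * h) x / ε g (h * x)) = (ε g x * ε (x⁻¹ * g * x) h / ε g (x * h)) := by
    intro x hx1 hx2
    have e1 : h⁻¹ * g * h = g := by rw [mul_assoc, ← hcomm, inv_mul_cancel_left]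
    have e2 : x⁻¹ * g * x = g := by rw [mul_assoc, ← hx1, inv_mul_cancel_left]
    rw [e1, e2, hx2, mul_comm (ε g x) (ε g h)]
  constructor
  · rintro ⟨-, hr⟩
    refine ⟨hcomm, fun x hx1 hx2 => ?_⟩
    simp only
    rw [hr x hx1 hx2, key x hx1 hx2]
  · rintro ⟨-, hr⟩
    refine ⟨hcomm, fun x hx1 hx2 => ?_⟩
    have := hr x hx1 hx2
    simp only at this
    rw [key x hx1 hx2] at this
    exact mul_right_cancel this
end

section
/- Let c be a twisted 2-cocycle on a finite group G and let g,h ∈ G with hg = gh. Then for every t ∈ G and every x ∈ Z(t⁻¹gt, t⁻¹ht), one has c_{t⁻¹gt}(t⁻¹ht, x)/c_{t⁻¹gt}(x, t⁻¹ht) = c_g(h, txt⁻¹)/c_g(txt⁻¹, h). In particular, (g,h) is a c-regular pair if and only if (t⁻¹gt, t⁻¹ht) is a c-regular pair. -/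
lemma key_identity {G : Type*} [Group G]
    (c : G → G → G → Circle) (hc : IsTwistedCocycle c)
    (g h t x : G) (hcomm : h * g = g * h)
    (hxg : x * (t⁻¹ * g * t) = (t⁻¹ * g * t) * x)
    (hxh : x * (t⁻¹ * h * t) = (t⁻¹ * h * t) * x) :
    c (t⁻¹ * g * t) (t⁻¹ * h * t) x / c (t⁻¹ * g * t) x (t⁻¹ * h * t) =
      c g h (t * x * t⁻¹) / c g (t * x * t⁻¹) h := by
  have hgh : h⁻¹ * g * h = g := by rw [mul_assoc, ← hcomm]; group
  have hyg' : (t * x * t⁻¹) * g = g * (t * x * t⁻¹) := by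
    have h2 := congrArg (fun z => t * z * t⁻¹) hxg
    simpa [mul_assoc] using h2
  have hyg : (t * x * t⁻¹)⁻¹ * g * (t * x * t⁻¹) = g := by
    rw [mul_assoc, ← hyg']; group
  have hyh : (t * x * t⁻¹) * h = h * (t * x * t⁻¹) := by
    have h2 := congrArg (fun z => t * z * t⁻¹) hxh
    simpa [mul_assoc] using h2
  have hth' : t * (t⁻¹ * h * t) = h * t := by group
  have hyt : (t * x * t⁻¹) * t = t * x := by group
  -- six cocycle instances
  have A := hc g h t x
  rw [hgh] at A
  have B := hc g t (t⁻¹ * h * t) x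
  rw [hth'] at B
  have C := hc g t x (t⁻¹ * h * t)
  rw [hxh] at C
  have E := hc g h (t * x * t⁻¹) t
  rw [hgh, hyt] at E
  have F := hc g (t * x * t⁻¹) t (t⁻¹ * h * t)
  rw [hyg, hyt, hth'] at F
  have G := hc g (t * x * t⁻¹) h t
  rw [hyg, hyh] at G
  -- transport to ℂ
  have cast := fun (a b : Circle) (hab : a = b) =>
    congrArg (fun z : Circle => (z : ℂ)) hab
  have A' := cast _ _ A; have B' := cast _ _ B; have C' := cast _ _ C
  have E' := cast _ _ E; have F' := cast _ _ F; have G' := cast _ _ G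
  push_cast at A' B' C' E' F' G'
  apply Circle.coe_injective
  push_cast
  rw [div_eq_div_iff (Circle.coe_ne_zero _) (Circle.coe_ne_zero _)]
  set P := (c (t⁻¹*g*t) (t⁻¹*h*t) x : ℂ); set Q := (c (t⁻¹*g*t) x (t⁻¹*h*t) : ℂ)
  set p1 := (c g t (t⁻¹*h*t) : ℂ); set p2 := (c g (h*t) x : ℂ)
  set p3 := (c g t ((t⁻¹*h*t)*x) : ℂ)
  set q1 := (c g t x : ℂ); set q2 := (c g (t*x) (t⁻¹*h*t) : ℂ)
  set a1 := (c g h t : ℂ); set a2 := (c g h (t*x) : ℂ)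
  set e1 := (c g h (t*x*t⁻¹) : ℂ); set e2 := (c g (h*(t*x*t⁻¹)) t : ℂ)
  set e3 := (c g (t*x*t⁻¹) t : ℂ)
  set f1 := (c g (t*x*t⁻¹) (h*t) : ℂ); set g1 := (c g (t*x*t⁻¹) h : ℂ)
  have hnz : a1 * e3 * p3 ≠ 0 := by
    simp [a1, e3, p3]
  apply mul_right_cancel₀ hnz
  linear_combination q1*e1*p1*G' - q1*p1*g1*E' - q1*a1*e1*F' + e3*p1*g1*A' - a1*e3*g1*B' + a1*e1*e3*C'

theorem regular_pair_conjugation {G : Type*} [Group G] [Fintype G]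
    (c : G → G → G → Circle) (hc : IsTwistedCocycle c)
    (g h : G) (hcomm : h * g = g * h) :
    (∀ t x : G, x * (t⁻¹ * g * t) = (t⁻¹ * g * t) * x → x * (t⁻¹ * h * t) = (t⁻¹ * h * t) * x →
      c (t⁻¹ * g * t) (t⁻¹ * h * t) x / c (t⁻¹ * g * t) x (t⁻¹ * h * t) =
        c g h (t * x * t⁻¹) / c g (t * x * t⁻¹) h) ∧
    (∀ t : G, IsRegularPair c g h ↔ IsRegularPair c (t⁻¹ * g * t) (t⁻¹ * h * t)) := by
  refine ⟨fun t x hxg hxh => key_identity c hc g h t x hcomm hxg hxh, fun t => ?_⟩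
  constructor
  · rintro ⟨-, hreg⟩
    have hcomm' : (t⁻¹ * h * t) * (t⁻¹ * g * t) = (t⁻¹ * g * t) * (t⁻¹ * h * t) := by
      have h2 := congrArg (fun z => t⁻¹ * z * t) hcomm
      simpa [mul_assoc] using h2
    refine ⟨hcomm', ?_⟩
    intro x hxg hxh
    have key := key_identity c hc g h t x hcomm hxg hxh
    have hyg : (t * x * t⁻¹) * g = g * (t * x * t⁻¹) := by
      have h2 := congrArg (fun z => t * z * t⁻¹) hxg
      simpa [mul_assoc] using h2
    have hyh : (t * x * t⁻¹) * h = h * (t * x * t⁻¹) := by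
      have h2 := congrArg (fun z => t * z * t⁻¹) hxh
      simpa [mul_assoc] using h2
    rw [hreg _ hyg hyh, div_self', div_eq_one] at key
    exact key
  · rintro ⟨-, hreg⟩
    refine ⟨hcomm, ?_⟩
    intro x hxg hxh
    have hxg' : (t⁻¹ * x * t) * (t⁻¹ * g * t) = (t⁻¹ * g * t) * (t⁻¹ * x * t) := by
      have h2 := congrArg (fun z => t⁻¹ * z * t) hxg
      simpa [mul_assoc] using h2
    have hxh' : (t⁻¹ * x * t) * (t⁻¹ * h * t) = (t⁻¹ * h * t) * (t⁻¹ * x * t) := by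
      have h2 := congrArg (fun z => t⁻¹ * z * t) hxh
      simpa [mul_assoc] using h2
    have key := key_identity c hc g h t (t⁻¹ * x * t) hcomm hxg' hxh'
    have hx : t * (t⁻¹ * x * t) * t⁻¹ = x := by group
    rw [hx, hreg _ hxg' hxh', div_self', eq_comm, div_eq_one, eq_comm] at key
    exact key.symm
end

section
/- Let ω be a 3-cocycle on a finite group G and c^ω the associated twisted 2-cocycle. Then a pair (g,h) is c^ω-regular if and only if (h,g) is c^ω-regular. -/
private lemma conj_eq {G : Type*} [Group G] {g x : G} (h : x * g = g * x) :
    x⁻¹ * g * x = g := by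
  rw [mul_assoc, ← h, ← mul_assoc, inv_mul_cancel, one_mul]

private lemma cOmega_comm {G : Type*} [Group G] (ω : G → G → G → Circle) {g h x : G}
    (h1 : h * g = g * h) (h2 : x * g = g * x) :
    cOmega ω g h x = ω g h x * ω h x g / ω h g x := by
  have e1 : h⁻¹ * g * h = g := conj_eq h1
  have e2 : (h * x)⁻¹ * g * (h * x) = g := by
    apply conj_eq
    calc h * x * g = h * (g * x) := by rw [mul_assoc, h2]
    _ = g * (h * x) := by rw [← mul_assoc, h1, mul_assoc]
  unfold cOmega
  rw [e1, e2]

private lemma swap_eq {M : Type*} [CommGroup M] {a b c d e f : M}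
    (h : a * b / c = d * e / f) : c * d / a = b * f / e := by
  rw [div_eq_div_iff_mul_eq_mul] at h ⊢
  simpa [mul_comm, mul_left_comm, mul_assoc] using h.symm

theorem cOmega_regular_symm {G : Type*} [Group G] [Fintype G]
    (ω : G → G → G → Circle) (hω : IsCocycle ω) (g h : G) :
    IsRegularPair (cOmega ω) g h ↔ IsRegularPair (cOmega ω) h g := by
  constructor <;> rintro ⟨hc, hreg⟩ <;>
    refine ⟨by rw [hc], fun x hx1 hx2 => ?_⟩
  · have := hreg x hx2 hx1
    rw [cOmega_comm ω hc hx2, cOmega_comm ω hx2 hc] at this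
    rw [cOmega_comm ω hc.symm hx1, cOmega_comm ω hx1 hc.symm]
    exact swap_eq this
  · have := hreg x hx2 hx1
    rw [cOmega_comm ω hc hx2, cOmega_comm ω hx2 hc] at this
    rw [cOmega_comm ω hc.symm hx1, cOmega_comm ω hx1 hc.symm]
    exact swap_eq this
end

section
/- Let ω be a 3-cocycle on a finite group G. Then for every g ∈ G, the pair (g,g) is c^ω-regular, i.e. c^ω_g(g,x) = c^ω_g(x,g) for all x ∈ Z(g). -/
theorem cOmega_diagonal_regular {G : Type*} [Group G] [Fintype G]
    (ω : G → G → G → Circle) (hω : IsCocycle ω) :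
    ∀ g x : G, x * g = g * x → cOmega ω g g x = cOmega ω g x g := by
  intro g x h
  have key : ∀ a : G, g * a = a * g → a⁻¹ * g * a = g := fun a ha => by
    rw [mul_assoc, ha, ← mul_assoc, inv_mul_cancel, one_mul]
  have h2 : g⁻¹ * g * g = g := by group
  have h3 : x⁻¹ * g * x = g := key x h.symm
  have h4 : (g * x)⁻¹ * g * (g * x) = g := key _ (by rw [mul_assoc, h])
  have h5 : (x * g)⁻¹ * g * (x * g) = g := key _ (by rw [← mul_assoc, ← h, mul_assoc])
  unfold cOmega
  rw [h2, h3, h4, h5, mul_comm (ω g g x), mul_div_assoc, div_self', mul_one,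
    mul_div_assoc, div_self', mul_one]
end

section
/- Let ω be a 3-cocycle on a finite group G and suppose g,h ∈ G commute and x ∈ Z(g,h). Then c^ω_g(h,x)/c^ω_g(x,h) = [ω(g,h,x)·ω(h,x,g)·ω(x,g,h)] / [ω(h,g,x)·ω(g,x,h)·ω(x,h,g)]. -/
theorem cOmega_regularity_key_identity {G : Type*} [Group G] [Fintype G]
    (ω : G → G → G → Circle) (hω : IsCocycle ω)
    (g h x : G) (hgh : h * g = g * h) (hxg : x * g = g * x) (hxh : x * h = h * x) :
    cOmega ω g h x / cOmega ω g x h =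
      ω g h x * ω h x g * ω x g h / (ω h g x * ω g x h * ω x h g) := by
  have eh : h⁻¹ * g * h = g := by rw [mul_assoc, ← hgh, ← mul_assoc, inv_mul_cancel, one_mul]
  have ex : x⁻¹ * g * x = g := by rw [mul_assoc, ← hxg, ← mul_assoc, inv_mul_cancel, one_mul]
  have chx : h * x * g = g * (h * x) := by rw [mul_assoc, hxg, ← mul_assoc, hgh, mul_assoc]
  have cxh : x * h * g = g * (x * h) := by rw [mul_assoc, hgh, ← mul_assoc, hxg, mul_assoc]
  have ehx : (h * x)⁻¹ * g * (h * x) = g := by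
    rw [mul_assoc, ← chx, ← mul_assoc, inv_mul_cancel, one_mul]
  have exh : (x * h)⁻¹ * g * (x * h) = g := by
    rw [mul_assoc, ← cxh, ← mul_assoc, inv_mul_cancel, one_mul]
  simp only [cOmega, eh, ex, ehx, exh]
  simp [div_eq_mul_inv, mul_inv, mul_assoc, mul_left_comm, mul_comm]
end

section
/- Let ω be a 3-cocycle on a finite group G and let g,x,y ∈ G mutually commute. Define η via the twisted 2-cocycle c^ω: η_g(x,y) = c^ω_g(y⁻¹,x)/c^ω_g(x,y⁻¹). Then η_x(g,y) = η_g(x,y)⁻¹. -/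
theorem eta_swap_base {G : Type*} [Group G] [Fintype G]
    (ω : G → G → G → Circle) (hω : IsCocycle ω)
    (g x y : G) (hgx : x * g = g * x) (hgy : y * g = g * y) (hxy : y * x = x * y) :
    cOmega ω x y⁻¹ g / cOmega ω x g y⁻¹ =
      (cOmega ω g y⁻¹ x / cOmega ω g x y⁻¹)⁻¹ := by
  have cgx : Commute g x := hgx.symm
  have cyx : Commute y x := hxy
  have cxg : Commute x g := hgx
  have cyg : Commute y g := hgy
  have conj : ∀ a b : G, Commute a b → a⁻¹ * b * a = b := fun a b h => by
    rw [h.inv_left.eq, mul_assoc, inv_mul_cancel, mul_one]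
  have h1 : (y⁻¹ * g)⁻¹ * x * (y⁻¹ * g) = x := conj _ _ (cyx.inv_left.mul_left cgx)
  have h2 : (y⁻¹)⁻¹ * x * y⁻¹ = x := conj _ _ cyx.inv_left
  have h3 : (g * y⁻¹)⁻¹ * x * (g * y⁻¹) = x := conj _ _ (cgx.mul_left cyx.inv_left)
  have h4 : g⁻¹ * x * g = x := conj _ _ cgx
  have h5 : (y⁻¹ * x)⁻¹ * g * (y⁻¹ * x) = g := conj _ _ (cyg.inv_left.mul_left cxg)
  have h6 : (y⁻¹)⁻¹ * g * y⁻¹ = g := conj _ _ cyg.inv_left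
  have h7 : (x * y⁻¹)⁻¹ * g * (x * y⁻¹) = g := conj _ _ (cxg.mul_left cyg.inv_left)
  have h8 : x⁻¹ * g * x = g := conj _ _ cxg
  simp only [cOmega, h1, h2, h3, h4, h5, h6, h7, h8]
  simp [div_eq_mul_inv, mul_inv, inv_inv, mul_comm, mul_left_comm, mul_assoc]
end
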